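/- Let a ∈ S_{♯,Y×T_0}, f ∈ L^{p'}(0,T;W^{-1,p'}(Ω)), let u_ε solve ∂_t u_ε − div(a(x/ε, t/ε^μ, Du_ε)) = f with zero initial and boundary data, let u solve the homogenized problem ∂_t u − div(b(Du)) = f, and let p_ε(x,t,ξ) = ξ + Dv_ξ(x/ε, t/ε^μ) be the correctors and M_ε the cell-averaging operator. If ∫_0^T ∫_Ω (a_ε(x,t,p_ε(x,t,M_ε Du)) − a_ε(x,t,Du_ε), p_ε(x,t,M_ε Du) − Du_ε) dx dt → 0 as ε → 0, then Du_ε − p_ε(·,·,M_ε Du) → 0 strongly in L^p(]0,T[×Ω;R^N). -/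

import Mathlib

open MeasureTheory Set Filter
open scoped RealInnerProductSpace ENNReal

/-- The unit cube `Y = ]0,1[^N`. -/
def unitCube (N : ℕ) : Set (EuclideanSpace ℝ (Fin N)) :=
  {x | ∀ k, x k ∈ Ioo (0 : ℝ) 1}

/-- The spatial cell `Y^i_ε = ε(i + ]0,1[^N)`. -/
def cellX (N : ℕ) (ε : ℝ) (i : Fin N → ℤ) : Set (EuclideanSpace ℝ (Fin N)) :=
  {x | ∀ k, x k ∈ Ioo (ε * i k) (ε * (i k + 1))}

/-- The time cell `T^j_{0,ε} = ε^μ (j + ]0,1[)`. -/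
noncomputable def cellT (ε μ : ℝ) (j : ℤ) : Set ℝ :=
  Ioo (ε ^ μ * j) (ε ^ μ * (j + 1))

open Classical in
/-- The local averaging operator `M_ε`: on each space-time cell contained in `Ω × ]0,T[`
the function is replaced by its mean value over the cell, and by `0` outside such cells. -/
noncomputable def Mop (N : ℕ) (Ω : Set (EuclideanSpace ℝ (Fin N))) (T ε μ : ℝ)
    (φ : EuclideanSpace ℝ (Fin N) × ℝ → EuclideanSpace ℝ (Fin N)) :
    EuclideanSpace ℝ (Fin N) × ℝ → EuclideanSpace ℝ (Fin N) := fun q =>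
  ∑' (i : Fin N → ℤ) (j : ℤ),
    if cellX N ε i ⊆ Ω ∧ cellT ε μ j ⊆ Ioo 0 T ∧ q.1 ∈ cellX N ε i ∧ q.2 ∈ cellT ε μ j then
      ((volume (cellX N ε i ×ˢ cellT ε μ j)).toReal)⁻¹ •
        ∫ r in cellX N ε i ×ˢ cellT ε μ j, φ r
    else 0

/-- The corrector `p_ε(x,t,ξ) = ξ + Dv_ξ(x/ε, t/ε^μ)`. -/
noncomputable def pcor {N : ℕ}
    (Dv : EuclideanSpace ℝ (Fin N) → EuclideanSpace ℝ (Fin N) → ℝ → EuclideanSpace ℝ (Fin N))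
    (ε μ : ℝ) (ξ : EuclideanSpace ℝ (Fin N)) (q : EuclideanSpace ℝ (Fin N) × ℝ) :
    EuclideanSpace ℝ (Fin N) :=
  ξ + Dv ξ (ε⁻¹ • q.1) (q.2 / ε ^ μ)

/-- reduction step (5.3)–(5.4): if the monotonicity pairing between
`p_ε(·,·,M_ε Du)` and `Du_ε` tends to `0`, then `Du_ε - p_ε(·,·,M_ε Du) → 0` strongly
in `L^p(]0,T[×Ω;ℝ^N)`.  Here `a_ε(x,t,ξ) = a(x/ε, t/ε^μ, ξ)`. -/
theorem stmt16 {N : ℕ} (Ω : Set (EuclideanSpace ℝ (Fin N))) (hΩo : IsOpen Ω)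
    (hΩb : Bornology.IsBounded Ω) (T p α μ c0 c1 c2 : ℝ) (hT : 0 < T) (hp : 2 ≤ p)
    (hα0 : 0 < α) (hα1 : α ≤ 1) (hμ : 0 < μ) (hc0 : 0 < c0) (hc1 : 0 < c1) (hc2 : 0 < c2)
    (a : EuclideanSpace ℝ (Fin N) → ℝ → EuclideanSpace ℝ (Fin N) → EuclideanSpace ℝ (Fin N))
    -- the class `S_{♯,Y×T₀}(c0,c1,c2,α)`:
    (haper : ∀ y τ ξ k, a (y + EuclideanSpace.single k 1) τ ξ = a y τ ξ ∧ a y (τ + 1) ξ = a y τ ξ)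
    (ha0 : ∀ y τ, ‖a y τ 0‖ ≤ c0)
    (hacont : ∀ y τ ξ1 ξ2,
      ‖a y τ ξ1 - a y τ ξ2‖ ≤ c1 * (1 + ‖ξ1‖ + ‖ξ2‖) ^ (p - 1 - α) * ‖ξ1 - ξ2‖ ^ α)
    (hamono : ∀ y τ ξ1 ξ2, c2 * ‖ξ1 - ξ2‖ ^ p ≤ ⟪a y τ ξ1 - a y τ ξ2, ξ1 - ξ2⟫)
    -- `Dv ξ` is the gradient of the cell-problem solution `v_ξ`:
    (Dv : EuclideanSpace ℝ (Fin N) → EuclideanSpace ℝ (Fin N) → ℝ → EuclideanSpace ℝ (Fin N))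
    -- `Du` is the gradient of the solution of the homogenized problem, `Duε ε` the gradient
    -- of the solution of the `ε`-problem:
    (Du : EuclideanSpace ℝ (Fin N) × ℝ → EuclideanSpace ℝ (Fin N))
    (hDu : MemLp Du (ENNReal.ofReal p) (volume.restrict (Ω ×ˢ Ioo 0 T)))
    (Duε : ℝ → EuclideanSpace ℝ (Fin N) × ℝ → EuclideanSpace ℝ (Fin N))
    (hDuε : ∀ ε ∈ Ioi (0:ℝ),
      MemLp (Duε ε) (ENNReal.ofReal p) (volume.restrict (Ω ×ˢ Ioo 0 T)))
    (hpε : ∀ ε ∈ Ioi (0:ℝ),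
      MemLp (fun q => pcor Dv ε μ (Mop N Ω T ε μ Du q) q) (ENNReal.ofReal p)
        (volume.restrict (Ω ×ˢ Ioo 0 T)))
    (hint : ∀ ε ∈ Ioi (0:ℝ), IntegrableOn
      (fun q => ⟪a (ε⁻¹ • q.1) (q.2 / ε ^ μ) (pcor Dv ε μ (Mop N Ω T ε μ Du q) q) -
          a (ε⁻¹ • q.1) (q.2 / ε ^ μ) (Duε ε q),
        pcor Dv ε μ (Mop N Ω T ε μ Du q) q - Duε ε q⟫) (Ω ×ˢ Ioo 0 T))
    (hconv : Tendsto
      (fun ε => ∫ q in Ω ×ˢ Ioo 0 T,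
        ⟪a (ε⁻¹ • q.1) (q.2 / ε ^ μ) (pcor Dv ε μ (Mop N Ω T ε μ Du q) q) -
            a (ε⁻¹ • q.1) (q.2 / ε ^ μ) (Duε ε q),
          pcor Dv ε μ (Mop N Ω T ε μ Du q) q - Duε ε q⟫)
      (nhdsWithin 0 (Ioi 0)) (nhds 0)) :
    Tendsto
      (fun ε => eLpNorm (fun q => Duε ε q - pcor Dv ε μ (Mop N Ω T ε μ Du q) q)
        (ENNReal.ofReal p) (volume.restrict (Ω ×ˢ Ioo 0 T)))
      (nhdsWithin 0 (Ioi 0)) (nhds 0) := by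
  have hp0 : (0:ℝ) < p := lt_of_lt_of_le two_pos hp
  set μ0 := volume.restrict (Ω ×ˢ Ioo (0:ℝ) T)
  set S := Ω ×ˢ Ioo (0:ℝ) T
  -- the Lᵖ integrand
  set F : ℝ → ℝ := fun ε =>
    ∫ q in S, ‖Duε ε q - pcor Dv ε μ (Mop N Ω T ε μ Du q) q‖ ^ p with hF
  have hptoReal : (ENNReal.ofReal p).toReal = p := ENNReal.toReal_ofReal hp0.le
  have hdiff : ∀ ε ∈ Ioi (0:ℝ),
      MemLp (fun q => Duε ε q - pcor Dv ε μ (Mop N Ω T ε μ Du q) q)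
        (ENNReal.ofReal p) μ0 := fun ε hε => (hDuε ε hε).sub (hpε ε hε)
  have hFint : ∀ ε ∈ Ioi (0:ℝ), Integrable
      (fun q => ‖Duε ε q - pcor Dv ε μ (Mop N Ω T ε μ Du q) q‖ ^ p) μ0 := by
    intro ε hε
    have := (hdiff ε hε).integrable_norm_rpow (by simp [ENNReal.ofReal_pos, hp0])
      ENNReal.ofReal_ne_top
    simpa [hptoReal, Real.rpow_natCast] using this
  have hF0 : ∀ ε ∈ Ioi (0:ℝ), 0 ≤ F ε := by
    intro ε hε
    exact integral_nonneg fun q => Real.rpow_nonneg (norm_nonneg _) p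
  have hFle : ∀ ε ∈ Ioi (0:ℝ), F ε ≤ c2⁻¹ *
      ∫ q in S, ⟪a (ε⁻¹ • q.1) (q.2 / ε ^ μ) (pcor Dv ε μ (Mop N Ω T ε μ Du q) q) -
          a (ε⁻¹ • q.1) (q.2 / ε ^ μ) (Duε ε q),
        pcor Dv ε μ (Mop N Ω T ε μ Du q) q - Duε ε q⟫ := by
    intro ε hε
    rw [inv_mul_eq_div, le_div_iff₀' hc2, ← smul_eq_mul, ← integral_smul]
    refine integral_mono ((hFint ε hε).smul c2) (hint ε hε) ?_
    intro q
    have h := hamono (ε⁻¹ • q.1) (q.2 / ε ^ μ)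
      (pcor Dv ε μ (Mop N Ω T ε μ Du q) q) (Duε ε q)
    have hnorm : ‖pcor Dv ε μ (Mop N Ω T ε μ Du q) q - Duε ε q‖ =
        ‖Duε ε q - pcor Dv ε μ (Mop N Ω T ε μ Du q) q‖ := norm_sub_rev _ _
    simpa [smul_eq_mul, hnorm] using h
  -- squeeze: F → 0
  have hFtend : Tendsto F (nhdsWithin 0 (Ioi 0)) (nhds 0) := by
    have hupper : Tendsto (fun ε => c2⁻¹ *
        ∫ q in S, ⟪a (ε⁻¹ • q.1) (q.2 / ε ^ μ) (pcor Dv ε μ (Mop N Ω T ε μ Du q) q) -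
            a (ε⁻¹ • q.1) (q.2 / ε ^ μ) (Duε ε q),
          pcor Dv ε μ (Mop N Ω T ε μ Du q) q - Duε ε q⟫)
        (nhdsWithin 0 (Ioi 0)) (nhds 0) := by
      simpa using hconv.const_mul c2⁻¹
    refine tendsto_of_tendsto_of_tendsto_of_le_of_le' tendsto_const_nhds hupper ?_ ?_
    · filter_upwards [self_mem_nhdsWithin] with ε hε using hF0 ε hε
    · filter_upwards [self_mem_nhdsWithin] with ε hε using hFle ε hε
  -- convert to eLpNorm
  have hEq : ∀ ε ∈ Ioi (0:ℝ),
      eLpNorm (fun q => Duε ε q - pcor Dv ε μ (Mop N Ω T ε μ Du q) q)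
        (ENNReal.ofReal p) μ0 = ENNReal.ofReal ((F ε) ^ (1 / p)) := by
    intro ε hε
    rw [(hdiff ε hε).eLpNorm_eq_integral_rpow_norm
      (by simp [ENNReal.ofReal_pos, hp0]) ENNReal.ofReal_ne_top]
    simp [hptoReal, hF]
    rfl
  have hcomp : Tendsto (fun ε => ENNReal.ofReal ((F ε) ^ (1 / p)))
      (nhdsWithin 0 (Ioi 0)) (nhds 0) := by
    have h1 : Tendsto (fun ε => (F ε) ^ (1 / p)) (nhdsWithin 0 (Ioi 0)) (nhds 0) := by
      have hc : ContinuousAt (fun x : ℝ => x ^ (1 / p)) 0 :=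
        Real.continuousAt_rpow_const 0 (1 / p) (Or.inr (by positivity))
      have := hc.tendsto.comp hFtend
      simpa [Function.comp_def, one_div, Real.zero_rpow (inv_ne_zero hp0.ne')] using this
    have := (ENNReal.continuous_ofReal.tendsto 0).comp h1
    simpa [Function.comp_def] using this
  refine hcomp.congr' ?_
  filter_upwards [self_mem_nhdsWithin] with ε hε using (hEq ε hε).symm
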